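/- arXiv:1405.5428 — 2 statements merged into one kernel-verified Lean document; each statement's English description precedes it below -/
import Mathlib

section
/- Let d ≥ 1 and let W : ℝ^d → ℝ ∪ {+∞} be measurable and bounded below by a finite constant, such that the limit W_∞ := lim_{|x|→∞} W(x) exists (possibly +∞) and W is unstable, i.e. there exists ρ ∈ P(ℝ^d) with E(ρ) < (1/2)W_∞. Then there exists S > 0 such that W is unstable on P_S(ℝ^d), i.e. there exists ρ ∈ P_S(ℝ^d) with E(ρ) < (1/2)W_∞; consequently W is unstable on P_R(ℝ^d) for every R ≥ S. -/
open MeasureTheory Filter Metric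
open scoped ENNReal

/-- `ℝ^d` with the Euclidean structure. -/
abbrev Ed (d : ℕ) : Type := EuclideanSpace ℝ (Fin d)

/-- The positive part of an extended real number, as an element of `ℝ≥0∞`. -/
noncomputable def EReal.posPart (x : EReal) : ℝ≥0∞ := (x ⊔ 0).abs

/-- The integral of an `EReal`-valued function, defined as the difference (in `EReal`)
of the lower integrals of the positive and the negative parts. -/
noncomputable def eInt {α : Type*} [MeasurableSpace α] (μ : Measure α) (f : α → EReal) :
    EReal :=
  ((∫⁻ x, (f x).posPart ∂μ : ℝ≥0∞) : EReal) - ((∫⁻ x, (-f x).posPart ∂μ : ℝ≥0∞) : EReal)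

/-- The interaction energy `E(ρ) = (1/2) ∬ W(x-y) dρ(x) dρ(y)`, with values in `EReal`. -/
noncomputable def energy {d : ℕ} (W : Ed d → EReal) (ρ : Measure (Ed d)) : EReal :=
  ((1 / 2 : ℝ) : EReal) * eInt (ρ.prod ρ) (fun p => W (p.1 - p.2))

/-- The support of a measure: the set of points all of whose open neighbourhoods have
positive measure. -/
def msupport {α : Type*} [TopologicalSpace α] [MeasurableSpace α] (μ : Measure α) : Set α :=
  {x | ∀ U : Set α, IsOpen U → x ∈ U → 0 < μ U}

/-- `ρ ∈ P_R(ℝ^d)`: the support of `ρ` is contained in the closed ball `B̄(0,R)`. -/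
def InBall {d : ℕ} (ρ : Measure (Ed d)) (R : ℝ) : Prop :=
  msupport ρ ⊆ Metric.closedBall (0 : Ed d) R

/-- `ρ` is a global minimiser of the interaction energy on `P(ℝ^d)`. -/
def IsMinimiser {d : ℕ} (W : Ed d → EReal) (ρ : Measure (Ed d)) : Prop :=
  IsProbabilityMeasure ρ ∧
    ∀ μ : Measure (Ed d), IsProbabilityMeasure μ → energy W ρ ≤ energy W μ

/-- `ρ` is a global minimiser of the interaction energy on `P_R(ℝ^d)`. -/
def IsMinimiserOn {d : ℕ} (W : Ed d → EReal) (ρ : Measure (Ed d)) (R : ℝ) : Prop :=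
  IsProbabilityMeasure ρ ∧ InBall ρ R ∧
    ∀ μ : Measure (Ed d), IsProbabilityMeasure μ → InBall μ R → energy W ρ ≤ energy W μ
/-!
Conditioning `ρ` on the ball `B̄(0, n)` gives a probability measure supported in that ball whose
energy is `ρ(B̄(0, n))⁻²` times the integral of `W(x - y)` over `B̄(0, n)²`. As `n → ∞` the
normalisation tends to `1`, the integrals of the positive parts converge by monotone convergence
and those of the negative parts stay bounded since `W` is bounded below, so the energies converge
to `E(ρ)` in `EReal` and the strict inequality `E(ρ) < W_∞ / 2` persists for large `n`.
-/

open ProbabilityTheory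
open scoped Topology

lemma EReal.posPart_eq_toENNReal (x : EReal) : x.posPart = x.toENNReal := by
  induction x using EReal.rec with
  | bot => simp [EReal.posPart]
  | coe x =>
    rcases le_total x 0 with h | h
    · simp [EReal.posPart, h, ENNReal.ofReal_of_nonpos h]
    · simp [EReal.posPart, h, EReal.abs_def, abs_of_nonneg h]
  | top => simp [EReal.posPart]

lemma EReal.posPart_neg_le_of_le {c : ℝ} {x : EReal} (h : (c : EReal) ≤ x) :
    (-x).posPart ≤ ENNReal.ofReal (-c) := by
  rw [posPart_eq_toENNReal, ← real_coe_toENNReal, EReal.coe_neg]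
  exact toENNReal_le_toENNReal (EReal.neg_le_neg_iff.2 h)

section Exhaustion

variable {α : Type*} [MeasurableSpace α] {s : ℕ → Set α}

lemma tendsto_measure_atTop_univ (μ : Measure α) (hmono : Monotone s)
    (hcover : ⋃ n, s n = Set.univ) : Tendsto (fun n => μ (s n)) atTop (𝓝 (μ Set.univ)) := by
  rw [← hcover]
  exact tendsto_measure_iUnion_atTop hmono

lemma tendsto_setLIntegral_atTop (μ : Measure α) (g : α → ℝ≥0∞) (hs : ∀ n, MeasurableSet (s n))
    (hmono : Monotone s) (hcover : ⋃ n, s n = Set.univ) :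
    Tendsto (fun n => ∫⁻ x in s n, g x ∂μ) atTop (𝓝 (∫⁻ x, g x ∂μ)) := by
  simpa only [withDensity_apply _ (hs _), MeasurableSet.univ, withDensity_apply,
    Measure.restrict_univ] using tendsto_measure_atTop_univ (μ.withDensity g) hmono hcover

lemma tendsto_eInt_smul_restrict {μ : Measure α} {f : α → EReal}
    (hneg : ∫⁻ x, (-f x).posPart ∂μ ≠ ∞) {c : ℕ → ℝ≥0∞} (hc : Tendsto c atTop (𝓝 1))
    (hs : ∀ n, MeasurableSet (s n)) (hmono : Monotone s) (hcover : ⋃ n, s n = Set.univ) :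
    Tendsto (fun n => eInt (c n • μ.restrict (s n)) f) atTop (𝓝 (eInt μ f)) := by
  have hpart : ∀ g : α → ℝ≥0∞, Tendsto (fun n => ((c n * ∫⁻ x in s n, g x ∂μ : ℝ≥0∞) : EReal))
      atTop (𝓝 (∫⁻ x, g x ∂μ : ℝ≥0∞)) := fun g => by
    refine continuous_coe_ennreal_ereal.continuousAt.tendsto.comp ?_
    simpa using ENNReal.Tendsto.mul hc (.inl one_ne_zero)
      (tendsto_setLIntegral_atTop μ g hs hmono hcover) (.inr ENNReal.one_ne_top)
  have hsub := (EReal.continuousAt_add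
    (p := ((∫⁻ x, (f x).posPart ∂μ : ℝ≥0∞), -((∫⁻ x, (-f x).posPart ∂μ : ℝ≥0∞) : EReal)))
    (.inr (by simpa using hneg)) (.inl (EReal.coe_ennreal_ne_bot _))).tendsto.comp
    ((hpart _).prodMk_nhds (hpart _).neg)
  simpa [eInt, lintegral_smul_measure, sub_eq_add_neg, Function.comp_def] using hsub

end Exhaustion

lemma prod_cond_self {α : Type*} [MeasurableSpace α] (μ : Measure α) [SFinite μ] (s : Set α) :
    (μ[|s]).prod (μ[|s]) = ((μ s)⁻¹ * (μ s)⁻¹) • (μ.prod μ).restrict (s ×ˢ s) := by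
  rw [ProbabilityTheory.cond, Measure.prod_smul_left, Measure.prod_smul_right, smul_smul,
    Measure.prod_restrict]

lemma msupport_cond_subset {α : Type*} [TopologicalSpace α] [MeasurableSpace α]
    (μ : Measure α) {s : Set α} (hs : IsClosed s) (hsm : MeasurableSet s) :
    msupport (μ[|s]) ⊆ s := by
  intro x hx
  by_contra hxs
  have := hx sᶜ hs.isOpen_compl hxs
  simp [cond_apply hsm] at this

lemma InBall.mono {d : ℕ} {ρ : Measure (Ed d)} {R R' : ℝ} (h : InBall ρ R) (hR : R ≤ R') :
    InBall ρ R' :=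
  h.trans (closedBall_subset_closedBall hR)

lemma tendsto_energy_cond {d : ℕ} {W : Ed d → EReal} {c : ℝ} (hc : ∀ x, (c : EReal) ≤ W x)
    (ρ : Measure (Ed d)) [IsProbabilityMeasure ρ] {s : ℕ → Set (Ed d)}
    (hs : ∀ n, MeasurableSet (s n)) (hmono : Monotone s) (hcover : ⋃ n, s n = Set.univ) :
    Tendsto (fun n => energy W (ρ[|s n])) atTop (𝓝 (energy W ρ)) := by
  have hneg : ∫⁻ p, (-W (p.1 - p.2)).posPart ∂ρ.prod ρ ≠ ∞ :=
    ne_top_of_le_ne_top (ENNReal.ofReal_ne_top (r := -c))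
      ((lintegral_mono fun p => EReal.posPart_neg_le_of_le (hc _)).trans_eq (by simp))
  have hnorm : Tendsto (fun n => (ρ (s n))⁻¹ * (ρ (s n))⁻¹) atTop (𝓝 1) := by
    have h := (tendsto_measure_atTop_univ ρ hmono hcover).inv
    simpa using ENNReal.Tendsto.mul h (.inr (by simp)) h (.inr (by simp))
  have hcover₂ : ⋃ n, s n ×ˢ s n = Set.univ := by
    rw [Set.iUnion_prod_of_monotone hmono hmono, hcover, Set.univ_prod_univ]
  simp only [energy, prod_cond_self]
  exact EReal.Tendsto.const_mul (tendsto_eInt_smul_restrict hneg hnorm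
    (fun n => (hs n).prod (hs n)) (fun m n h => Set.prod_mono (hmono h) (hmono h)) hcover₂)
    (.inl (EReal.coe_ne_bot _)) (.inl (EReal.coe_ne_top _))

theorem instability_on_finite_ball_general
    {d : ℕ} (W : Ed d → EReal)
    (c : ℝ) (hbound : ∀ x, (c : EReal) ≤ W x)
    (Winf : EReal)
    (hunst : ∃ ρ : Measure (Ed d), IsProbabilityMeasure ρ ∧
      energy W ρ < ((1 / 2 : ℝ) : EReal) * Winf) :
    ∃ S : ℝ, 0 < S ∧
      (∃ ρ : Measure (Ed d), IsProbabilityMeasure ρ ∧ InBall ρ S ∧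
        energy W ρ < ((1 / 2 : ℝ) : EReal) * Winf) ∧
      ∀ R : ℝ, S ≤ R → ∃ ρ : Measure (Ed d), IsProbabilityMeasure ρ ∧ InBall ρ R ∧
        energy W ρ < ((1 / 2 : ℝ) : EReal) * Winf := by
  obtain ⟨ρ, hρ, hlt⟩ := hunst
  let B : ℕ → Set (Ed d) := fun n => closedBall 0 n
  have hmono : Monotone B := fun m n h => closedBall_subset_closedBall (Nat.cast_le.2 h)
  have hcover : ⋃ n, B n = Set.univ := iUnion_closedBall_nat 0
  have hmass : ∀ᶠ n in atTop, ρ (B n) ≠ 0 :=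
    (tendsto_measure_atTop_univ ρ hmono hcover).eventually_ne (by simp)
  have henergy : ∀ᶠ n in atTop, energy W (ρ[|B n]) < ((1 / 2 : ℝ) : EReal) * Winf :=
    (tendsto_energy_cond hbound ρ (fun _ => measurableSet_closedBall) hmono
      hcover).eventually_lt_const hlt
  obtain ⟨n, hn, hn0, hnE⟩ := ((eventually_ge_atTop 1).and (hmass.and henergy)).exists
  have hprob : IsProbabilityMeasure (ρ[|B n]) := cond_isProbabilityMeasure hn0
  have hball : InBall (ρ[|B n]) n :=
    msupport_cond_subset ρ isClosed_closedBall measurableSet_closedBall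
  exact ⟨n, by exact_mod_cast hn, ⟨_, hprob, hball, hnE⟩,
    fun R hR => ⟨_, hprob, hball.mono hR, hnE⟩⟩

/-- **Lemma (instability at finite radius).** If `W` is measurable, bounded below by a
finite constant, the limit `W_∞` at infinity exists and `W` is unstable, then there exists
`S > 0` such that `W` is unstable on `P_S(ℝ^d)`, and consequently on `P_R(ℝ^d)` for every
`R ≥ S`. -/
theorem instability_on_finite_ball
    {d : ℕ} (hd : 1 ≤ d) (W : Ed d → EReal) (hWmeas : Measurable W)
    (c : ℝ) (hbound : ∀ x, (c : EReal) ≤ W x)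
    (Winf : EReal) (hlim : Tendsto W (cocompact (Ed d)) (nhds Winf))
    (hunst : ∃ ρ : Measure (Ed d), IsProbabilityMeasure ρ ∧
      energy W ρ < ((1 / 2 : ℝ) : EReal) * Winf) :
    ∃ S : ℝ, 0 < S ∧
      (∃ ρ : Measure (Ed d), IsProbabilityMeasure ρ ∧ InBall ρ S ∧
        energy W ρ < ((1 / 2 : ℝ) : EReal) * Winf) ∧
      ∀ R : ℝ, S ≤ R → ∃ ρ : Measure (Ed d), IsProbabilityMeasure ρ ∧ InBall ρ R ∧
        energy W ρ < ((1 / 2 : ℝ) : EReal) * Winf :=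
  instability_on_finite_ball_general W c hbound Winf hunst
end

section
/- Let d ≥ 1 and let W : ℝ^d → ℝ ∪ {+∞} satisfy Hypotheses (H1)–(H5), and let ρ ∈ P(ℝ^d) be a global minimiser of the interaction energy E. Then there exist constants r'' > 0 and m' > 0 such that ρ(B(x₀, r'')) ≥ m' for every point x₀ in the support of ρ; in particular one may take m' = (A' − E(ρ))/(A' − W_min/2) for any A' with E(ρ) < A' < (1/2)W_∞. -/
open MeasureTheory Filter Metric
open scoped ENNReal

/-! Let `B` be the unit ball around a point `x₀` of the support, `p = ρ(B) > 0`. Removing a fraction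
`s` of the mass of `ρ` in `B` and renormalising is an admissible competitor; its energy to first
order in `s` shows, by minimality, that `∬_{B × ℝᵈ} W(x - y) + ∬_{ℝᵈ × B} W(x - y) ≤ 4 p E(ρ)`.
On the other hand, take `A' > E(ρ)` with `2 A' < W_∞`: then `W ≥ 2 A'` outside some ball `B(0, r)`,
and `W ≥ W_min` everywhere, so each of the two integrals is at least
`2 A' p - (2 A' - W_min) p ρ(B(x₀, r + 1))`. Dividing by `p` gives
`ρ(B(x₀, r + 1)) ≥ (A' - E(ρ)) / (A' - W_min / 2)`. -/

open Set Topology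
open scoped NNReal

namespace EReal

theorem posPart_eq_toENNReal_s16 (x : EReal) : x.posPart = x.toENNReal := by
  induction x with
  | bot => simp [posPart]
  | coe r =>
    rw [posPart, toENNReal_of_ne_top (coe_ne_top r), toReal_coe]
    rcases le_total r 0 with h | h
    · rw [sup_eq_right.2 (by exact_mod_cast h), ENNReal.ofReal_eq_zero.2 h, abs_zero]
    · rw [sup_eq_left.2 (by exact_mod_cast h), abs_def, abs_of_nonneg h]
  | top => simp [posPart]

theorem posPart_coe (r : ℝ) : (r : EReal).posPart = ENNReal.ofReal r := by
  rw [posPart_eq_toENNReal_s16, toENNReal_of_ne_top (coe_ne_top r), toReal_coe]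

theorem posPart_mono : Monotone posPart := fun x y h => by
  simpa only [posPart_eq_toENNReal_s16] using toENNReal_le_toENNReal h

theorem posPart_neg_le_ofReal_neg {x : EReal} {m : ℝ} (h : (m : EReal) ≤ x) :
    (-x).posPart ≤ ENNReal.ofReal (-m) := by
  rw [← posPart_coe, coe_neg]
  exact posPart_mono (neg_le_neg_iff.2 h)

end EReal

section RealIntegral

variable {α : Type*} [MeasurableSpace α] {π π' : Measure α} {f g : α → EReal} {m : ℝ}

/-- `eInt π f` as a real number; junk unless both parts are finite. -/
noncomputable def realInt (π : Measure α) (f : α → EReal) : ℝ :=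
  (∫⁻ x, (f x).posPart ∂π).toReal - (∫⁻ x, (-f x).posPart ∂π).toReal

theorem lintegral_posPart_neg_ne_top [IsFiniteMeasure π] (hf : ∀ x, (m : EReal) ≤ f x) :
    ∫⁻ x, (-f x).posPart ∂π ≠ ⊤ :=
  ne_top_of_le_ne_top (ENNReal.mul_ne_top ENNReal.ofReal_ne_top (measure_ne_top π univ))
    ((lintegral_mono fun x => EReal.posPart_neg_le_ofReal_neg (hf x)).trans_eq
      (lintegral_const _))

theorem eInt_eq_realInt [IsFiniteMeasure π] (hf : ∀ x, (m : EReal) ≤ f x)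
    (hP : ∫⁻ x, (f x).posPart ∂π ≠ ⊤) : eInt π f = realInt π f := by
  rw [eInt, realInt, EReal.coe_sub, ← EReal.coe_ennreal_toReal hP,
    ← EReal.coe_ennreal_toReal (lintegral_posPart_neg_ne_top hf)]

theorem realInt_add [IsFiniteMeasure π] [IsFiniteMeasure π'] (hf : ∀ x, (m : EReal) ≤ f x)
    (hP : ∫⁻ x, (f x).posPart ∂π ≠ ⊤) (hP' : ∫⁻ x, (f x).posPart ∂π' ≠ ⊤) :
    realInt (π + π') f = realInt π f + realInt π' f := by
  simp only [realInt, lintegral_add_measure]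
  rw [ENNReal.toReal_add hP hP', ENNReal.toReal_add (lintegral_posPart_neg_ne_top hf)
    (lintegral_posPart_neg_ne_top hf)]
  ring

theorem realInt_smul (c : ℝ≥0) : realInt (c • π) f = c * realInt π f := by
  rw [realInt, realInt, lintegral_smul_measure, lintegral_smul_measure, ENNReal.toReal_smul,
    ENNReal.toReal_smul, NNReal.smul_def, NNReal.smul_def, smul_eq_mul, smul_eq_mul, mul_sub]

theorem realInt_mono [IsFiniteMeasure π] (hfg : ∀ x, f x ≤ g x) (hf : ∀ x, (m : EReal) ≤ f x)
    (hPg : ∫⁻ x, (g x).posPart ∂π ≠ ⊤) : realInt π f ≤ realInt π g := by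
  have hpos : ∫⁻ x, (f x).posPart ∂π ≤ ∫⁻ x, (g x).posPart ∂π :=
    lintegral_mono fun x => EReal.posPart_mono (hfg x)
  have hneg : ∫⁻ x, (-g x).posPart ∂π ≤ ∫⁻ x, (-f x).posPart ∂π :=
    lintegral_mono fun x => EReal.posPart_mono (EReal.neg_le_neg_iff.2 (hfg x))
  have := ENNReal.toReal_mono hPg hpos
  have := ENNReal.toReal_mono (lintegral_posPart_neg_ne_top hf) hneg
  rw [realInt, realInt]
  linarith

theorem realInt_coe {u : α → ℝ} (hu : Integrable u π) :
    realInt π (fun x => (u x : EReal)) = ∫ x, u x ∂π := by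
  simp only [realInt, ← EReal.coe_neg, EReal.posPart_coe]
  exact (integral_eq_lintegral_pos_part_sub_lintegral_neg_part hu).symm

theorem le_realInt_of_le_off [IsFiniteMeasure π] {s : Set α} {c t : ℝ} (hs : MeasurableSet s)
    (hmc : m ≤ c) (hf : ∀ x, (m : EReal) ≤ f x) (hfc : ∀ x ∉ s, (c : EReal) ≤ f x)
    (hP : ∫⁻ x, (f x).posPart ∂π ≠ ⊤) (hst : π.real s ≤ t) :
    c * π.real univ - (c - m) * t ≤ realInt π f := by
  set u : α → ℝ := fun x => c + s.indicator (fun _ => m - c) x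
  have hu : Integrable u π := (integrable_const c).add ((integrable_const _).indicator hs)
  have hmu : ∀ x, m ≤ u x := fun x => by
    by_cases hx : x ∈ s <;> simp [u, hx, hmc]
  have huf : ∀ x, (u x : EReal) ≤ f x := fun x => by
    by_cases hx : x ∈ s
    · simpa [u, hx] using hf x
    · simpa [u, hx] using hfc x hx
  calc c * π.real univ - (c - m) * t ≤ c * π.real univ - (c - m) * π.real s := by
        gcongr
    _ = ∫ x, u x ∂π := by
        rw [integral_add (integrable_const c) ((integrable_const _).indicator hs),
          integral_const, integral_indicator_const _ hs, smul_eq_mul, smul_eq_mul]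
        ring
    _ = realInt π (fun x => (u x : EReal)) := (realInt_coe hu).symm
    _ ≤ realInt π f := realInt_mono huf (fun x => EReal.coe_le_coe_iff.2 (hmu x)) hP

theorem mul_measureReal_univ_le_realInt [IsFiniteMeasure π] (hf : ∀ x, (m : EReal) ≤ f x)
    (hP : ∫⁻ x, (f x).posPart ∂π ≠ ⊤) : m * π.real univ ≤ realInt π f := by
  simpa using le_realInt_of_le_off MeasurableSet.univ le_rfl hf
    (fun x hx => absurd (mem_univ x) hx) hP le_rfl

theorem lintegral_posPart_ne_top_of_le (h : π ≤ π') (hP' : ∫⁻ x, (f x).posPart ∂π' ≠ ⊤) :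
    ∫⁻ x, (f x).posPart ∂π ≠ ⊤ :=
  ne_top_of_le_ne_top hP' (lintegral_mono' h le_rfl)

end RealIntegral

section Bilinear

variable {β : Type*} [MeasurableSpace β] {μ μ' ν ν' : Measure β} [IsFiniteMeasure μ]
  [IsFiniteMeasure μ'] [IsFiniteMeasure ν] [IsFiniteMeasure ν'] {f : β × β → EReal} {m : ℝ}

theorem realInt_prod_add (hf : ∀ z, (m : EReal) ≤ f z)
    (hP : ∫⁻ z, (f z).posPart ∂(μ.prod ν) ≠ ⊤) (hP' : ∫⁻ z, (f z).posPart ∂(μ.prod ν') ≠ ⊤) :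
    realInt (μ.prod (ν + ν')) f = realInt (μ.prod ν) f + realInt (μ.prod ν') f := by
  rw [Measure.prod_add]
  exact realInt_add hf hP hP'

theorem realInt_add_prod (hf : ∀ z, (m : EReal) ≤ f z)
    (hP : ∫⁻ z, (f z).posPart ∂(μ.prod ν) ≠ ⊤) (hP' : ∫⁻ z, (f z).posPart ∂(μ'.prod ν) ≠ ⊤) :
    realInt ((μ + μ').prod ν) f = realInt (μ.prod ν) f + realInt (μ'.prod ν) f := by
  rw [Measure.add_prod]
  exact realInt_add hf hP hP'

theorem lintegral_posPart_smul_add_smul_prod_self_ne_top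
    (hμμ : ∫⁻ z, (f z).posPart ∂(μ.prod μ) ≠ ⊤) (hμν : ∫⁻ z, (f z).posPart ∂(μ.prod ν) ≠ ⊤)
    (hνμ : ∫⁻ z, (f z).posPart ∂(ν.prod μ) ≠ ⊤) (hνν : ∫⁻ z, (f z).posPart ∂(ν.prod ν) ≠ ⊤)
    (a b : ℝ≥0) : ∫⁻ z, (f z).posPart ∂((a • μ + b • ν).prod (a • μ + b • ν)) ≠ ⊤ := by
  simp only [Measure.prod_add, Measure.add_prod, Measure.prod_smul_left, Measure.prod_smul_right,
    lintegral_add_measure, lintegral_smul_measure]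
  repeat' first
    | assumption
    | refine ENNReal.add_ne_top.2 ⟨?_, ?_⟩
    | apply ENNReal.nnreal_smul_ne_top

theorem realInt_smul_add_smul_prod_self (hf : ∀ z, (m : EReal) ≤ f z)
    (hμμ : ∫⁻ z, (f z).posPart ∂(μ.prod μ) ≠ ⊤) (hμν : ∫⁻ z, (f z).posPart ∂(μ.prod ν) ≠ ⊤)
    (hνμ : ∫⁻ z, (f z).posPart ∂(ν.prod μ) ≠ ⊤) (hνν : ∫⁻ z, (f z).posPart ∂(ν.prod ν) ≠ ⊤)
    (a b : ℝ≥0) :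
    realInt ((a • μ + b • ν).prod (a • μ + b • ν)) f =
      a ^ 2 * realInt (μ.prod μ) f + a * b * (realInt (μ.prod ν) f + realInt (ν.prod μ) f) +
        b ^ 2 * realInt (ν.prod ν) f := by
  simp only [Measure.prod_add, Measure.add_prod, Measure.prod_smul_left, Measure.prod_smul_right]
  rw [realInt_add hf, realInt_smul, realInt_smul, realInt_add hf, realInt_add hf]
  · simp only [realInt_smul]
    ring
  all_goals
    simp only [lintegral_add_measure, lintegral_smul_measure]
    repeat' first
      | assumption
      | refine ENNReal.add_ne_top.2 ⟨?_, ?_⟩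
      | apply ENNReal.nnreal_smul_ne_top

end Bilinear

/- `h` is minimality against the weights `w₁ = (1 - s) / (1 - s p)`, `w₂ = 1 / (1 - s p)`, which
keep `p w₁ + (1 - p) w₂ = 1`; the claim is its first-order term at `s = 0`. -/
theorem first_variation_inequality {S C D p : ℝ} (hp1 : p ≤ 1)
    (h : ∀ s, 0 < s → s < 1 → S + C + D ≤ ((1 - s) / (1 - s * p)) ^ 2 * S +
      (1 - s) / (1 - s * p) * (1 / (1 - s * p)) * C + (1 / (1 - s * p)) ^ 2 * D) :
    2 * S + C ≤ 2 * p * (S + C + D) := by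
  set E := S + C + D
  have hslope : ∀ s ∈ Ioo (0 : ℝ) 1, 2 * S + C - 2 * p * E ≤ s * (S - p ^ 2 * E) := by
    rintro s ⟨hs0, hs1⟩
    have hd : 0 < 1 - s * p := by nlinarith
    have hcleared : (1 - s * p) ^ 2 * E ≤ (1 - s) ^ 2 * S + (1 - s) * C + D := by
      refine (mul_le_mul_of_nonneg_left (h s hs0 hs1) (sq_nonneg (1 - s * p))).trans_eq ?_
      field_simp
    nlinarith
  have hlim : Tendsto (fun s => s * (S - p ^ 2 * E)) (𝓝[>] 0) (𝓝 0) :=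
    ((continuous_mul_const _).tendsto' 0 0 (zero_mul _)).mono_left nhdsWithin_le_nhds
  linarith [ge_of_tendsto hlim (eventually_of_mem (Ioo_mem_nhdsGT one_pos) hslope)]

section NearDiagonal

variable {α : Type*} [PseudoMetricSpace α] [MeasurableSpace α] [OpensMeasurableSpace α]
  (ρ : Measure α) [IsFiniteMeasure ρ] (x₀ : α) (r δ : ℝ)

theorem measureReal_restrict_prod_dist_lt_le :
    ((ρ.restrict (ball x₀ δ)).prod ρ).real {z | dist z.1 z.2 < r} ≤
      ρ.real (ball x₀ δ) * ρ.real (ball x₀ (r + δ)) := by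
  rw [Measure.restrict_prod_eq_prod_univ,
    measureReal_restrict_apply' (measurableSet_ball.prod .univ), ← measureReal_prod_prod]
  refine measureReal_mono ?_
  rintro ⟨x, y⟩ ⟨hxy : dist x y < r, hx : dist x x₀ < δ, -⟩
  exact ⟨hx, mem_ball.2 (by linarith [dist_triangle_left y x₀ x])⟩

theorem measureReal_prod_restrict_dist_lt_le :
    (ρ.prod (ρ.restrict (ball x₀ δ))).real {z | dist z.1 z.2 < r} ≤
      ρ.real (ball x₀ (r + δ)) * ρ.real (ball x₀ δ) := by
  rw [← Measure.restrict_univ (μ := ρ), Measure.prod_restrict, Measure.restrict_univ,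
    measureReal_restrict_apply' (MeasurableSet.univ.prod measurableSet_ball),
    ← measureReal_prod_prod]
  refine measureReal_mono ?_
  rintro ⟨x, y⟩ ⟨hxy : dist x y < r, -, hy : dist y x₀ < δ⟩
  exact ⟨mem_ball.2 (by linarith [dist_triangle x y x₀]), hy⟩

end NearDiagonal

theorem isProbabilityMeasure_smul_restrict_add_smul_restrict_compl {α : Type*}
    [MeasurableSpace α] {ρ : Measure α} [IsProbabilityMeasure ρ] {B : Set α}
    (hB : MeasurableSet B) {a b : ℝ≥0} (h : a * ρ.real B + b * (1 - ρ.real B) = 1) :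
    IsProbabilityMeasure (a • ρ.restrict B + b • ρ.restrict Bᶜ) := by
  rw [isProbabilityMeasure_iff_real, measureReal_add_apply, measureReal_nnreal_smul_apply,
    measureReal_nnreal_smul_apply, measureReal_restrict_apply_univ,
    measureReal_restrict_apply_univ, measureReal_compl hB, probReal_univ, h]

section Energy

variable {d : ℕ} {W : Ed d → EReal} {m : ℝ}

/-- The bilinear form `∬ W(x - y) dμ(x) dν(y)` behind `energy`, as a real number. -/
noncomputable def interaction (W : Ed d → EReal) (μ ν : Measure (Ed d)) : ℝ :=
  realInt (μ.prod ν) fun z => W (z.1 - z.2)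

variable {μ : Measure (Ed d)} [IsFiniteMeasure μ]

theorem lintegral_posPart_ne_top_of_energy_ne_top (hW : ∀ x, (m : EReal) ≤ W x)
    (hE : energy W μ ≠ ⊤) : ∫⁻ z, (W (z.1 - z.2)).posPart ∂(μ.prod μ) ≠ ⊤ := by
  intro hP
  apply hE
  rw [energy, eInt, hP, EReal.coe_ennreal_top,
    ← EReal.coe_ennreal_toReal (lintegral_posPart_neg_ne_top (f := fun z : Ed d × Ed d =>
      W (z.1 - z.2)) fun z => hW (z.1 - z.2)), EReal.top_sub_coe]
  exact EReal.coe_mul_top_of_pos (by norm_num)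

theorem energy_eq_interaction (hW : ∀ x, (m : EReal) ≤ W x)
    (hP : ∫⁻ z, (W (z.1 - z.2)).posPart ∂(μ.prod μ) ≠ ⊤) :
    energy W μ = ((1 / 2 * interaction W μ μ : ℝ) : EReal) := by
  rw [energy, eInt_eq_realInt (f := fun z : Ed d × Ed d => W (z.1 - z.2)) (fun z => hW _) hP,
    EReal.coe_mul, interaction]

theorem toReal_energy (hW : ∀ x, (m : EReal) ≤ W x) (hE : energy W μ ≠ ⊤) :
    (energy W μ).toReal = 1 / 2 * interaction W μ μ := by
  rw [energy_eq_interaction hW (lintegral_posPart_ne_top_of_energy_ne_top hW hE), EReal.toReal_coe]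

theorem coe_toReal_energy (hW : ∀ x, (m : EReal) ≤ W x) (hE : energy W μ ≠ ⊤) :
    ((energy W μ).toReal : EReal) = energy W μ := by
  rw [toReal_energy hW hE,
    energy_eq_interaction hW (lintegral_posPart_ne_top_of_energy_ne_top hW hE)]

theorem half_le_toReal_energy [IsProbabilityMeasure μ] (hW : ∀ x, (m : EReal) ≤ W x)
    (hE : energy W μ ≠ ⊤) : m / 2 ≤ (energy W μ).toReal := by
  have := mul_measureReal_univ_le_realInt (π := μ.prod μ) (fun z => hW (z.1 - z.2))
    (lintegral_posPart_ne_top_of_energy_ne_top hW hE)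
  rw [probReal_univ, mul_one] at this
  rw [toReal_energy hW hE, interaction]
  linarith

theorem le_interaction_of_far_field {c r t : ℝ} {π : Measure (Ed d × Ed d)} [IsFiniteMeasure π]
    (hW : ∀ x, (m : EReal) ≤ W x) (hmc : m ≤ c) (hfar : ∀ z, r ≤ ‖z‖ → (c : EReal) ≤ W z)
    (hP : ∫⁻ z, (W (z.1 - z.2)).posPart ∂π ≠ ⊤) (ht : π.real {z | dist z.1 z.2 < r} ≤ t) :
    c * π.real univ - (c - m) * t ≤ realInt π fun z => W (z.1 - z.2) :=
  le_realInt_of_le_off (isOpen_lt (by fun_prop) continuous_const).measurableSet hmc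
    (fun z => hW _) (fun z hz => hfar _ (by simpa [dist_eq_norm] using hz)) hP ht

theorem interaction_restrict_add_le_of_isMinimiser {ρ : Measure (Ed d)} (hρ : IsMinimiser W ρ)
    (hW : ∀ x, (m : EReal) ≤ W x) (hE : energy W ρ ≠ ⊤) {B : Set (Ed d)}
    (hB : MeasurableSet B) :
    interaction W (ρ.restrict B) ρ + interaction W ρ (ρ.restrict B) ≤
      2 * ρ.real B * interaction W ρ ρ := by
  obtain ⟨hprob, hmin⟩ := hρ
  have hf : ∀ z : Ed d × Ed d, (m : EReal) ≤ W (z.1 - z.2) := fun z => hW _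
  have hP := lintegral_posPart_ne_top_of_energy_ne_top hW hE
  have hfin : ∀ s t : Set (Ed d),
      ∫⁻ z, (W (z.1 - z.2)).posPart ∂((ρ.restrict s).prod (ρ.restrict t)) ≠ ⊤ := fun s t =>
    lintegral_posPart_ne_top_of_le
      (Measure.prod_mono Measure.restrict_le_self Measure.restrict_le_self) hP
  have hexpand := realInt_smul_add_smul_prod_self hf (hfin B B) (hfin B Bᶜ) (hfin Bᶜ B)
    (hfin Bᶜ Bᶜ)
  have hρρ := hexpand 1 1
  have hBρ := realInt_prod_add hf (hfin B B) (hfin B Bᶜ)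
  have hρB := realInt_add_prod hf (hfin B B) (hfin Bᶜ B)
  simp only [one_smul, Measure.restrict_add_restrict_compl hB, NNReal.coe_one, one_pow, one_mul,
    mul_one] at hρρ hBρ hρB
  rw [interaction, interaction, interaction, hBρ, hρB, hρρ]
  set S := realInt ((ρ.restrict B).prod (ρ.restrict B)) fun z => W (z.1 - z.2)
  set C₁ := realInt ((ρ.restrict B).prod (ρ.restrict Bᶜ)) fun z => W (z.1 - z.2)
  set C₂ := realInt ((ρ.restrict Bᶜ).prod (ρ.restrict B)) fun z => W (z.1 - z.2)
  set D := realInt ((ρ.restrict Bᶜ).prod (ρ.restrict Bᶜ)) fun z => W (z.1 - z.2)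
  suffices 2 * S + (C₁ + C₂) ≤ 2 * ρ.real B * (S + (C₁ + C₂) + D) by linarith
  refine first_variation_inequality measureReal_le_one fun s hs0 hs1 => ?_
  have hd : 0 < 1 - s * ρ.real B := by nlinarith [measureReal_le_one (μ := ρ) (s := B)]
  -- the competitor: a fraction `s` of the mass in `B` is removed, then the whole is renormalised
  set a : ℝ≥0 := ((1 - s) / (1 - s * ρ.real B)).toNNReal
  set b : ℝ≥0 := (1 / (1 - s * ρ.real B)).toNNReal
  have ha : (a : ℝ) = (1 - s) / (1 - s * ρ.real B) :=
    Real.coe_toNNReal _ (div_nonneg (by linarith) hd.le)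
  have hb : (b : ℝ) = 1 / (1 - s * ρ.real B) := Real.coe_toNNReal _ (by positivity)
  have hM : IsProbabilityMeasure (a • ρ.restrict B + b • ρ.restrict Bᶜ) :=
    isProbabilityMeasure_smul_restrict_add_smul_restrict_compl hB (by
      rw [ha, hb]
      field_simp
      ring)
  have hle := hmin _ hM
  rw [energy_eq_interaction hW hP, energy_eq_interaction hW
    (lintegral_posPart_smul_add_smul_prod_self_ne_top (hfin B B) (hfin B Bᶜ) (hfin Bᶜ B)
      (hfin Bᶜ Bᶜ) a b), EReal.coe_le_coe_iff, interaction, interaction, hexpand, ha, hb,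
    hρρ] at hle
  linarith

theorem ofReal_le_measure_ball_of_isMinimiser {ρ : Measure (Ed d)} (hρ : IsMinimiser W ρ)
    (hW : ∀ x, (m : EReal) ≤ W x) {A r : ℝ}
    (hfar : ∀ z, r ≤ ‖z‖ → ((2 * A : ℝ) : EReal) ≤ W z) (hEA : energy W ρ < A) {x₀ : Ed d}
    (hx₀ : x₀ ∈ msupport ρ) :
    ENNReal.ofReal ((A - (energy W ρ).toReal) / (A - m / 2)) ≤ ρ (ball x₀ (r + 1)) := by
  have := hρ.1
  have hE : energy W ρ ≠ ⊤ := hEA.ne_top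
  have hP := lintegral_posPart_ne_top_of_energy_ne_top hW hE
  have hEA' : (energy W ρ).toReal < A := by
    rwa [← EReal.coe_lt_coe_iff, coe_toReal_energy hW hE]
  have hmE := half_le_toReal_energy hW hE
  rw [toReal_energy hW hE] at hEA' hmE ⊢
  have hp : 0 < ρ.real (ball x₀ 1) :=
    ENNReal.toReal_pos (hx₀ _ isOpen_ball (mem_ball_self one_pos)).ne' (measure_ne_top _ _)
  have hmA : m ≤ 2 * A := by linarith
  have hX := le_interaction_of_far_field hW hmA hfar
    (lintegral_posPart_ne_top_of_le (Measure.prod_mono Measure.restrict_le_self le_rfl) hP)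
    (measureReal_restrict_prod_dist_lt_le ρ x₀ r 1)
  have hY := le_interaction_of_far_field hW hmA hfar
    (lintegral_posPart_ne_top_of_le (Measure.prod_mono le_rfl Measure.restrict_le_self) hP)
    (measureReal_prod_restrict_dist_lt_le ρ x₀ r 1)
  have hvar := interaction_restrict_add_le_of_isMinimiser hρ hW hE (measurableSet_ball (x := x₀)
    (ε := 1))
  rw [← univ_prod_univ, measureReal_prod_prod, measureReal_restrict_apply_univ, probReal_univ]
    at hX hY
  rw [interaction, interaction] at hvar
  have hq : 2 * A - (2 * A - m) * ρ.real (ball x₀ (r + 1)) ≤ interaction W ρ ρ :=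
    le_of_mul_le_mul_left (by linarith) hp
  refine ENNReal.ofReal_le_of_le_toReal ?_
  rw [← measureReal_def, div_le_iff₀ (by linarith)]
  linarith

end Energy

theorem exists_forall_le_norm_lt_of_tendsto_cocompact {E β : Type*} [NormedAddCommGroup E]
    [ProperSpace E] [LinearOrder β] [TopologicalSpace β] [OrderTopology β] {f : E → β} {L c : β}
    (hf : Tendsto f (cocompact E) (𝓝 L)) (hc : c < L) : ∃ r, ∀ z, r ≤ ‖z‖ → c < f z := by
  rw [← Metric.cobounded_eq_cocompact] at hf
  simpa using hasBasis_cobounded_norm.eventually_iff.1 (hf.eventually (eventually_gt_nhds hc))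

theorem EReal.coe_two_mul_lt_of_lt_half_mul {a : ℝ} {w : EReal}
    (h : (a : EReal) < ((1 / 2 : ℝ) : EReal) * w) : ((2 * a : ℝ) : EReal) < w := by
  induction w with
  | bot => simp [EReal.coe_mul_bot_of_pos] at h
  | coe w =>
    rw [← EReal.coe_mul, EReal.coe_lt_coe_iff] at h
    exact EReal.coe_lt_coe_iff.2 (by linarith)
  | top => exact EReal.coe_lt_top _

theorem uniform_local_mass_global_minimiser_general
    {d : ℕ} (W : Ed d → EReal)
    (Wmin : ℝ) (hbound : ∀ x, (Wmin : EReal) ≤ W x)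
    (Winf : EReal) (hlim : Tendsto W (cocompact (Ed d)) (nhds Winf))
    (hunst : ∃ μ : Measure (Ed d), IsProbabilityMeasure μ ∧
      energy W μ < ((1 / 2 : ℝ) : EReal) * Winf)
    (ρ : Measure (Ed d)) (hρ : IsMinimiser W ρ) :
    (∃ r'' : ℝ, 0 < r'' ∧ ∃ m' : ℝ, 0 < m' ∧
      ∀ x₀ ∈ msupport ρ, ENNReal.ofReal m' ≤ ρ (Metric.ball x₀ r'')) ∧
    ∀ A' : ℝ, energy W ρ < (A' : EReal) → (A' : EReal) < ((1 / 2 : ℝ) : EReal) * Winf →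
      ∃ r'' : ℝ, 0 < r'' ∧ ∀ x₀ ∈ msupport ρ,
        ENNReal.ofReal ((A' - (energy W ρ).toReal) / (A' - Wmin / 2)) ≤
          ρ (Metric.ball x₀ r'') := by
  have hmass : ∀ A' : ℝ, energy W ρ < (A' : EReal) →
      (A' : EReal) < ((1 / 2 : ℝ) : EReal) * Winf → ∃ r'' : ℝ, 0 < r'' ∧ ∀ x₀ ∈ msupport ρ,
        ENNReal.ofReal ((A' - (energy W ρ).toReal) / (A' - Wmin / 2)) ≤ ρ (ball x₀ r'') := by
    intro A hEA hAW
    obtain ⟨r, hr⟩ := exists_forall_le_norm_lt_of_tendsto_cocompact hlim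
      (EReal.coe_two_mul_lt_of_lt_half_mul hAW)
    exact ⟨max r 0 + 1, by positivity, fun x₀ hx₀ => ofReal_le_measure_ball_of_isMinimiser hρ
      hbound (fun z hz => (hr z ((le_max_left r 0).trans hz)).le) hEA hx₀⟩
  refine ⟨?_, hmass⟩
  obtain ⟨μ, hμ, hμE⟩ := hunst
  obtain ⟨A, hEA, hAW⟩ := EReal.lt_iff_exists_real_btwn.1 ((hρ.2 μ hμ).trans_lt hμE)
  obtain ⟨r'', hr'', hball⟩ := hmass A hEA hAW
  have := hρ.1
  have hE : energy W ρ ≠ ⊤ := hEA.ne_top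
  have hEA' : (energy W ρ).toReal < A := by
    rwa [← EReal.coe_lt_coe_iff, coe_toReal_energy hbound hE]
  have hmE := half_le_toReal_energy hbound hE
  exact ⟨r'', hr'', _, div_pos (by linarith) (by linarith), hball⟩

/-- **Lemma (uniform local mass for global minimisers).** Under Hypotheses (H1)–(H5), if
`ρ` is a global minimiser of the interaction energy, then there are `r'' > 0` and
`m' > 0` such that `ρ(B(x₀, r'')) ≥ m'` for every `x₀` in the support of `ρ`; moreover,
for any `A'` with `E(ρ) < A' < (1/2) W_∞` one may take `m' = (A' − E(ρ))/(A' − W_min/2)`. -/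
theorem uniform_local_mass_global_minimiser
    {d : ℕ} (hd : 1 ≤ d) (W : Ed d → EReal) (hWmeas : Measurable W)
    (Wmin : ℝ) (hWmin : Wmin < 0) (hbound : ∀ x, (Wmin : EReal) ≤ W x)
    (hloc : ∀ (x : Ed d) (r : ℝ), 0 < r →
      ∫⁻ y in Metric.ball x r, (W y).abs ∂volume < ⊤)
    (hsym : ∀ x, W (-x) = W x)
    (Winf : EReal) (hlim : Tendsto W (cocompact (Ed d)) (nhds Winf))
    (hunst : ∃ μ : Measure (Ed d), IsProbabilityMeasure μ ∧
      energy W μ < ((1 / 2 : ℝ) : EReal) * Winf)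
    (hlsc : LowerSemicontinuous W)
    (ρ : Measure (Ed d)) (hρ : IsMinimiser W ρ) :
    (∃ r'' : ℝ, 0 < r'' ∧ ∃ m' : ℝ, 0 < m' ∧
      ∀ x₀ ∈ msupport ρ, ENNReal.ofReal m' ≤ ρ (Metric.ball x₀ r'')) ∧
    ∀ A' : ℝ, energy W ρ < (A' : EReal) → (A' : EReal) < ((1 / 2 : ℝ) : EReal) * Winf →
      ∃ r'' : ℝ, 0 < r'' ∧ ∀ x₀ ∈ msupport ρ,
        ENNReal.ofReal ((A' - (energy W ρ).toReal) / (A' - Wmin / 2)) ≤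
          ρ (Metric.ball x₀ r'') :=
  uniform_local_mass_global_minimiser_general W Wmin hbound Winf hlim hunst ρ hρ
end
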